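/- arXiv:2503.17571 — 3 statements merged into one kernel-verified Lean document; each statement's English description precedes it below -/
import Mathlib

section
/- For every positive integer L, the following identity of formal power series in q holds: the sum over n ≥ 0 of b₂(L,n)·qⁿ equals q²·(1 + q + q² + … + q^{L−2})·∏_{k=0}^{L−3}(1 + q^{2+k}). -/
/-- `λ'_j`: the number of parts of `π` that are at least `j` (the conjugate partition). -/
def conjPart (π : Multiset ℕ) (j : ℕ) : ℕ := (π.filter (fun p => j ≤ p)).card

/-- `λ_i`: the `i`-th largest part of `π` (1-indexed). -/
def rowPart (π : Multiset ℕ) (i : ℕ) : ℕ :=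
  ((Finset.Icc 1 π.sum).filter (fun j => i ≤ conjPart π j)).card

/-- The number of cells of hook length `t` in the Young diagram of `π`:
cells `(i,j)` with `1 ≤ i`, `1 ≤ j ≤ λ_i` and `λ_i + λ'_j − i − j + 1 = t`. -/
def hookCount (π : Multiset ℕ) (t : ℕ) : ℕ :=
  (((Finset.Icc 1 π.sum) ×ˢ (Finset.Icc 1 π.sum)).filter
    (fun c => c.2 ≤ rowPart π c.1 ∧ rowPart π c.1 + conjPart π c.2 + 1 = t + c.1 + c.2)).card

/-- `b₂(L,n)`: the total number of cells of hook length 2 summed over all partitions of `n`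
into distinct parts whose largest part is at most `L`. -/
def b2L (L n : ℕ) : ℕ :=
  ∑ π ∈ (Nat.Partition.distincts n).filter (fun π => ∀ p ∈ π.parts, p ≤ L),
    hookCount π.parts 2

/-!
A partition into distinct parts is a finite set `S` of positive integers. Its cells of hook
length 2 have arm 1 and leg 0, and there is one for each part `p ≥ 2` with `p - 1 ∉ S`. Writing
the generating function as a sum `B_L` over `S ⊆ [1, L]` and splitting according to whether
`L + 1 ∈ S` gives the recurrence
`B_{L+1} = (1 + q^{L+1}) B_L + q^{L+1} ∏_{i=1}^{L-1} (1 + q^i)`, where the last term counts the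
new part `L + 1` when `L ∉ S`; the closed form satisfies the same recurrence since
`1 + q + ⋯ + q^{L-1} = 1 + q (1 + ⋯ + q^{L-2})`.
-/

open Finset PowerSeries

section YoungDiagram

variable {s : Multiset ℕ} {i j p : ℕ}

lemma conjPart_antitone (s : Multiset ℕ) : Antitone (conjPart s) := fun _ _ h =>
  Multiset.card_le_card (Multiset.monotone_filter_right s fun _ hp => h.trans hp)

lemma conjPart_eq_conjPart_succ_add_count (s : Multiset ℕ) (j : ℕ) :
    conjPart s j = conjPart s (j + 1) + s.count j := by
  have hsplit : s.filter (j ≤ ·) = s.filter (j + 1 ≤ ·) + s.filter (j = ·) := by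
    rw [Multiset.filter_add_filter,
      (Multiset.filter_eq_nil (p := fun a => j + 1 ≤ a ∧ j = a)).2 fun a _ => by omega, add_zero]
    exact Multiset.filter_congr fun p _ => by omega
  rw [conjPart, conjPart, Multiset.count_eq_card_filter_eq, hsplit, Multiset.card_add]

lemma one_le_conjPart_of_mem (hp : p ∈ s) : 1 ≤ conjPart s p :=
  Multiset.card_pos_iff_exists_mem.2 ⟨p, Multiset.mem_filter.2 ⟨hp, le_rfl⟩⟩

lemma le_sum_of_one_le_conjPart (h : 1 ≤ conjPart s j) : j ≤ s.sum := by
  obtain ⟨p, hp⟩ := Multiset.card_pos_iff_exists_mem.1 h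
  rw [Multiset.mem_filter] at hp
  exact hp.2.trans (Multiset.le_sum_of_mem hp.1)

lemma conjPart_le_sum (hj : 1 ≤ j) : conjPart s j ≤ s.sum :=
  calc conjPart s j = (s.filter (j ≤ ·)).card • 1 := (mul_one _).symm
    _ ≤ (s.filter (j ≤ ·)).sum :=
      Multiset.card_nsmul_le_sum fun _ hx => hj.trans (Multiset.mem_filter.1 hx).2
    _ ≤ s.sum := by
      conv_rhs => rw [← Multiset.filter_add_not (j ≤ ·) s, Multiset.sum_add]
      exact Nat.le_add_right _ _

lemma le_rowPart_iff (hi : 1 ≤ i) (hj : 1 ≤ j) : j ≤ rowPart s i ↔ i ≤ conjPart s j := by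
  constructor
  · intro h
    by_contra hlt
    have hsub : (Icc 1 s.sum).filter (fun j' => i ≤ conjPart s j') ⊆ Icc 1 (j - 1) := by
      intro j' hj'
      simp only [mem_filter, mem_Icc] at hj' ⊢
      refine ⟨hj'.1.1, not_lt.1 fun hjj' => hlt ?_⟩
      exact hj'.2.trans (conjPart_antitone s (by omega))
    have := card_le_card hsub
    rw [Nat.card_Icc] at this
    rw [rowPart] at h
    omega
  · intro h
    have hsub : Icc 1 j ⊆ (Icc 1 s.sum).filter (fun j' => i ≤ conjPart s j') := by
      intro j' hj'
      rw [mem_Icc] at hj'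
      rw [mem_filter, mem_Icc]
      exact ⟨⟨hj'.1, hj'.2.trans (le_sum_of_one_le_conjPart (hi.trans h))⟩,
        h.trans (conjPart_antitone s hj'.2)⟩
    simpa [rowPart] using card_le_card hsub

lemma conjPart_rowPart_succ_lt (hi : 1 ≤ i) : conjPart s (rowPart s i + 1) < i := by
  by_contra h
  have := (le_rowPart_iff hi (Nat.le_add_left 1 _)).2 (not_lt.1 h)
  omega

lemma le_conjPart_rowPart (hi : 1 ≤ i) (hr : 1 ≤ rowPart s i) : i ≤ conjPart s (rowPart s i) :=
  (le_rowPart_iff hi hr).1 le_rfl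

lemma rowPart_mem (hi : 1 ≤ i) (hr : 1 ≤ rowPart s i) : rowPart s i ∈ s := by
  have hsplit := conjPart_eq_conjPart_succ_add_count s (rowPart s i)
  have hlt := conjPart_rowPart_succ_lt (s := s) hi
  have hle := le_conjPart_rowPart hi hr
  exact Multiset.count_pos.1 (by omega)

lemma conjPart_rowPart (hs : s.Nodup) (hi : 1 ≤ i) (hr : 1 ≤ rowPart s i) :
    conjPart s (rowPart s i) = i := by
  have hsplit := conjPart_eq_conjPart_succ_add_count s (rowPart s i)
  have hlt := conjPart_rowPart_succ_lt (s := s) hi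
  have hcount := Multiset.nodup_iff_count_le_one.1 hs (rowPart s i)
  have hle := le_conjPart_rowPart hi hr
  omega

lemma rowPart_conjPart (hp : p ∈ s) (hp1 : 1 ≤ p) : rowPart s (conjPart s p) = p := by
  have hc := one_le_conjPart_of_mem hp
  have hsplit := conjPart_eq_conjPart_succ_add_count s p
  have hcount := Multiset.count_pos.2 hp
  have hle := (le_rowPart_iff hc hp1).2 le_rfl
  have hlt : ¬ p + 1 ≤ rowPart s (conjPart s p) := fun h => by
    have := (le_rowPart_iff hc (by omega)).1 h
    omega
  omega

lemma rowPart_eq_succ_of_hook_two (hs : s.Nodup) (hi : 1 ≤ i) (hj : 1 ≤ j)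
    (hle : j ≤ rowPart s i) (hhook : rowPart s i + conjPart s j + 1 = 2 + i + j) :
    rowPart s i = j + 1 ∧ s.count j = 0 := by
  have hr : 1 ≤ rowPart s i := hj.trans hle
  have hcr := conjPart_rowPart hs hi hr
  have hij := (le_rowPart_iff hi hj).1 hle
  have hsplit := conjPart_eq_conjPart_succ_add_count s j
  -- arm 0 and leg 1 would need two rows of length `j`
  have hrj : rowPart s i = j + 1 := by
    by_contra hne
    rw [(by omega : rowPart s i = j)] at hcr
    omega
  rw [hrj] at hcr
  exact ⟨hrj, by omega⟩

end YoungDiagram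

def gapBelowCount (S : Finset ℕ) : ℕ := #{p ∈ S | 2 ≤ p ∧ p - 1 ∉ S}

theorem hookCount_val_two (S : Finset ℕ) : hookCount S.val 2 = gapBelowCount S := by
  symm
  refine card_nbij' (fun p => (conjPart S.val p, p - 1)) (fun c => rowPart S.val c.1) ?_ ?_ ?_ ?_
  · intro p hp
    simp only [mem_coe, mem_filter] at hp
    obtain ⟨hpS, hp2, hgap⟩ := hp
    have hc := one_le_conjPart_of_mem hpS
    have hrow := rowPart_conjPart hpS (by omega)
    have hcount : S.val.count (p - 1) = 0 := Multiset.count_eq_zero.2 (by simpa using hgap)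
    have hsplit := conjPart_eq_conjPart_succ_add_count S.val (p - 1)
    rw [Nat.sub_add_cancel (by omega : 1 ≤ p)] at hsplit
    simp only [mem_coe, mem_filter, mem_product, mem_Icc, hrow]
    refine ⟨⟨⟨hc, conjPart_le_sum (by omega)⟩, by omega, ?_⟩, by omega, by omega⟩
    exact (Nat.sub_le p 1).trans (Multiset.le_sum_of_mem hpS)
  · rintro ⟨i, j⟩ hc
    simp only [mem_coe, mem_filter, mem_product, mem_Icc] at hc ⊢
    obtain ⟨⟨⟨hi, -⟩, hj, -⟩, hle, hhook⟩ := hc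
    obtain ⟨hrj, hcount⟩ := rowPart_eq_succ_of_hook_two S.nodup hi hj hle hhook
    refine ⟨rowPart_mem hi (hj.trans hle), by omega, ?_⟩
    rw [hrj, Nat.add_sub_cancel]
    exact Multiset.count_eq_zero.1 hcount
  · intro p hp
    simp only [mem_coe, mem_filter] at hp
    exact rowPart_conjPart hp.1 (by omega)
  · rintro ⟨i, j⟩ hc
    simp only [mem_coe, mem_filter, mem_product, mem_Icc] at hc
    obtain ⟨⟨⟨hi, -⟩, hj, -⟩, hle, hhook⟩ := hc
    obtain ⟨hrj, -⟩ := rowPart_eq_succ_of_hook_two S.nodup hi hj hle hhook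
    exact Prod.ext (conjPart_rowPart S.nodup hi (hj.trans hle)) (by simp [hrj])

lemma Nat.Partition.parts_nodup_of_mem_distincts {n : ℕ} {π : n.Partition}
    (h : π ∈ Nat.Partition.distincts n) : π.parts.Nodup :=
  (mem_filter.1 h).2

section GeneratingFunction

variable {R : Type*} [CommSemiring R]

theorem mk_sum_distincts_parts_le (L : ℕ) (f : Finset ℕ → R) :
    PowerSeries.mk (fun n => ∑ π ∈ (Nat.Partition.distincts n).filter
        (fun π => ∀ p ∈ π.parts, p ≤ L), f π.parts.toFinset) =
      ∑ S ∈ (Icc 1 L).powerset, C (f S) * X ^ ∑ i ∈ S, i := by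
  ext n
  simp only [coeff_mk, map_sum, coeff_C_mul_X_pow, ← sum_filter]
  refine sum_bij' (fun π _ => π.parts.toFinset)
    (fun S hS => ⟨S.val, fun hp => ?_, ?_⟩) ?_ ?_ ?_ ?_ (fun _ _ => rfl)
  · exact (mem_Icc.1 (mem_powerset.1 (mem_filter.1 hS).1 hp)).1
  · exact (sum_val S).trans (mem_filter.1 hS).2.symm
  · intro π hπ
    obtain ⟨hπ, hle⟩ := mem_filter.1 hπ
    have hnd := Nat.Partition.parts_nodup_of_mem_distincts hπ
    refine mem_filter.2 ⟨mem_powerset.2 fun p hp => ?_, ?_⟩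
    · rw [Multiset.mem_toFinset] at hp
      exact mem_Icc.2 ⟨π.parts_pos hp, hle p hp⟩
    · calc n = π.parts.toFinset.val.sum := by rw [Multiset.toFinset_val, hnd.dedup, π.parts_sum]
        _ = _ := sum_val _
  · intro S hS
    refine mem_filter.2 ⟨mem_filter.2 ⟨mem_univ _, S.nodup⟩, fun p hp => ?_⟩
    exact (mem_Icc.1 (mem_powerset.1 (mem_filter.1 hS).1 hp)).2
  · intro π hπ
    exact Nat.Partition.ext
      ((Multiset.toFinset_val _).trans
        (Nat.Partition.parts_nodup_of_mem_distincts (mem_filter.1 hπ).1).dedup)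
  · intro S _
    exact val_toFinset S

lemma prod_one_add_pow_eq_sum_powerset (x : R) (s : Finset ℕ) :
    ∏ i ∈ s, (1 + x ^ i) = ∑ S ∈ s.powerset, x ^ ∑ i ∈ S, i := by
  simp only [prod_one_add, ← prod_pow_eq_pow_sum]

lemma sum_powerset_insert_ite_mem {α M : Type*} [DecidableEq α] [AddCommMonoid M] {s : Finset α}
    {a : α} (ha : a ∉ s) (g : Finset α → M) :
    ∑ S ∈ (insert a s).powerset, (if a ∈ S then 0 else g S) = ∑ S ∈ s.powerset, g S := by
  rw [sum_powerset_insert ha, sum_congr rfl fun S _ => if_pos (mem_insert_self a S), sum_const_zero,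
    add_zero]
  exact sum_congr rfl fun S hS => if_neg fun haS => ha (mem_powerset.1 hS haS)

lemma prod_Icc_one_add_pow (x : R) (N : ℕ) :
    ∏ i ∈ Icc 1 (N + 1), (1 + x ^ i) = (1 + x) * ∏ k ∈ range N, (1 + x ^ (2 + k)) := by
  induction N with
  | zero => simp
  | succ N ih =>
    rw [← insert_Icc_right_eq_Icc_add_one (by omega), prod_insert (by simp), ih, prod_range_succ]
    ring_nf

end GeneratingFunction

lemma gapBelowCount_insert_succ {S : Finset ℕ} {L : ℕ} (hL : 1 ≤ L) (hS : ∀ p ∈ S, p ≤ L) :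
    gapBelowCount (insert (L + 1) S) = gapBelowCount S + if L ∈ S then 0 else 1 := by
  have hfresh : L + 1 ∉ S := fun h => by have := hS _ h; omega
  have hcongr : {p ∈ S | 2 ≤ p ∧ p - 1 ∉ insert (L + 1) S} = {p ∈ S | 2 ≤ p ∧ p - 1 ∉ S} :=
    filter_congr fun p hp => by
      have hne : p - 1 ≠ L + 1 := by have := hS p hp; omega
      simp [hne]
  rw [gapBelowCount, filter_insert, hcongr, gapBelowCount]
  by_cases hLS : L ∈ S
  · simp [hLS]
  · simp [hLS, card_insert_of_notMem, hfresh, (by omega : 2 ≤ L + 1)]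

noncomputable def gapGenFun (L : ℕ) : ℚ⟦X⟧ :=
  ∑ S ∈ (Icc 1 L).powerset, (gapBelowCount S : ℚ⟦X⟧) * X ^ ∑ i ∈ S, i

theorem mk_b2L (L : ℕ) : PowerSeries.mk (fun n => (b2L L n : ℚ)) = gapGenFun L := by
  have hb : ∀ n, (b2L L n : ℚ) = ∑ π ∈ (Nat.Partition.distincts n).filter
      (fun π => ∀ p ∈ π.parts, p ≤ L), (gapBelowCount π.parts.toFinset : ℚ) := by
    intro n
    rw [b2L, Nat.cast_sum]
    refine sum_congr rfl fun π hπ => ?_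
    rw [← hookCount_val_two, Multiset.toFinset_val,
      (Nat.Partition.parts_nodup_of_mem_distincts (mem_filter.1 hπ).1).dedup]
  simp only [hb]
  rw [mk_sum_distincts_parts_le L (fun S => (gapBelowCount S : ℚ)), gapGenFun]
  simp only [map_natCast]

lemma gapGenFun_of_le_one {L : ℕ} (hL : L ≤ 1) : gapGenFun L = 0 := by
  refine sum_eq_zero fun S hS => ?_
  have hS : gapBelowCount S = 0 := card_eq_zero.2 <| filter_eq_empty_iff.2 fun p hp h => by
    have := (mem_Icc.1 (mem_powerset.1 hS hp)).2
    omega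
  rw [hS, Nat.cast_zero, zero_mul]

lemma gapGenFun_add_two (N : ℕ) :
    gapGenFun (N + 2) =
      (1 + X ^ (N + 2)) * gapGenFun (N + 1) + X ^ (N + 2) * ∏ i ∈ Icc 1 N, (1 + X ^ i) := by
  have hinsert : ∀ S ∈ (Icc 1 (N + 1)).powerset,
      (gapBelowCount (insert (N + 1 + 1) S) : ℚ⟦X⟧) * X ^ ∑ i ∈ insert (N + 1 + 1) S, i =
        X ^ (N + 2) * ((gapBelowCount S : ℚ⟦X⟧) * X ^ ∑ i ∈ S, i) +
          X ^ (N + 2) * (if N + 1 ∈ S then 0 else X ^ ∑ i ∈ S, i) := by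
    intro S hS
    have hS' : ∀ p ∈ S, p ≤ N + 1 := fun p hp => (mem_Icc.1 (mem_powerset.1 hS hp)).2
    rw [gapBelowCount_insert_succ (by omega) hS', sum_insert fun h => by have := hS' _ h; omega,
      pow_add]
    split_ifs <;> push_cast <;> ring
  rw [gapGenFun]
  change ∑ S ∈ (Icc 1 (N + 1 + 1)).powerset, _ = _
  rw [← insert_Icc_right_eq_Icc_add_one (by omega : 1 ≤ N + 1 + 1),
    sum_powerset_insert (by simp), sum_congr rfl hinsert, sum_add_distrib, ← mul_sum, ← mul_sum,
    ← insert_Icc_right_eq_Icc_add_one (by omega : 1 ≤ N + 1), sum_powerset_insert_ite_mem (by simp),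
    ← prod_one_add_pow_eq_sum_powerset, insert_Icc_right_eq_Icc_add_one (by omega : 1 ≤ N + 1),
    ← gapGenFun]
  ring

theorem gapGenFun_add_two_eq_mul_prod (N : ℕ) :
    gapGenFun (N + 2) =
      X ^ 2 * (∑ k ∈ range (N + 1), X ^ k) * ∏ k ∈ range N, (1 + X ^ (2 + k)) := by
  induction N with
  | zero => simp [gapGenFun_add_two, gapGenFun_of_le_one]
  | succ N ih =>
    have hgeom := (geom_sum_succ' (x := (X : ℚ⟦X⟧)) (n := N + 1)).symm.trans geom_sum_succ
    rw [gapGenFun_add_two, ih, prod_Icc_one_add_pow, prod_range_succ, sum_range_succ _ (N + 1)]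
    linear_combination (-X ^ (N + 4) * ∏ k ∈ range N, (1 + (X : ℚ⟦X⟧) ^ (2 + k))) * hgeom

open PowerSeries in
theorem b2L_gen_fun_general (L : ℕ) :
    PowerSeries.mk (fun n => (b2L L n : ℚ)) =
      (X : ℚ⟦X⟧) ^ 2 * (∑ k ∈ Finset.range (L - 1), (X : ℚ⟦X⟧) ^ k) *
        ∏ k ∈ Finset.range (L - 2), (1 + (X : ℚ⟦X⟧) ^ (2 + k)) := by
  rw [mk_b2L]
  obtain hL | ⟨N, rfl⟩ : L ≤ 1 ∨ ∃ N, L = N + 2 := by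
    rcases L with _ | _ | N <;> simp
  · simp [gapGenFun_of_le_one hL, Nat.sub_eq_zero_of_le hL]
  · simpa using gapGenFun_add_two_eq_mul_prod N

open PowerSeries in
theorem b2L_gen_fun (L : ℕ) (hL : 0 < L) :
    PowerSeries.mk (fun n => (b2L L n : ℚ)) =
      (X : ℚ⟦X⟧) ^ 2 * (∑ k ∈ Finset.range (L - 1), (X : ℚ⟦X⟧) ^ k) *
        ∏ k ∈ Finset.range (L - 2), (1 + (X : ℚ⟦X⟧) ^ (2 + k)) :=
  b2L_gen_fun_general L
end

section
/- Fix a positive integer L and a non-negative integer n. Let B_{L,n} be the set of pairs (π₁,π₂) of partitions with |π₁| + |π₂| = n, where π₁ is a partition into distinct parts all different from 1 with largest part at most L−1, and π₂ is a partition with at most one part, that part being at most L−2. Let A_{L,n} be the set of pairs (π₁,π₂) of partitions with |π₁| + |π₂| = n, where π₁ is a partition into odd parts with largest part at most 2L−1, and π₂ is a partition with at most one part, that part being odd and at most 2L−3. Then there exists an injection from B_{L,n} into A_{L,n}; in particular |B_{L,n}| ≤ |A_{L,n}|. -/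
/-!
Statement 11: Fix a positive integer `L` and `n ≥ 0`.  With `B_{L,n}` the set of pairs
`(π₁,π₂)` of partitions with `|π₁| + |π₂| = n`, where `π₁` has distinct parts, all
different from 1 and at most `L−1`, and `π₂` has at most one part, that part being at most
`L−2`; and `A_{L,n}` the set of pairs `(π₁,π₂)` with `|π₁| + |π₂| = n`, where `π₁` has odd
parts all at most `2L−1` and `π₂` has at most one part, that part being odd and at most
`2L−3`; there exists an injection from `B_{L,n}` into `A_{L,n}`, and in particular
`|B_{L,n}| ≤ |A_{L,n}|`.  Partitions are modelled as multisets of positive parts.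
-/

/-- The set `B_{L,n}`: pairs `(π₁,π₂)` of partitions (as multisets of positive integers)
with `|π₁| + |π₂| = n`, where `π₁` has distinct parts, all different from `1` and of size
at most `L−1`, and `π₂` has at most one part, of size at most `L−2`. -/
def setB (L n : ℕ) : Set (Multiset ℕ × Multiset ℕ) :=
  {p | p.1.sum + p.2.sum = n ∧
       p.1.Nodup ∧ (∀ x ∈ p.1, 0 < x ∧ x ≠ 1 ∧ x ≤ L - 1) ∧
       p.2.card ≤ 1 ∧ (∀ x ∈ p.2, 0 < x ∧ x ≤ L - 2)}

/-- The set `A_{L,n}`: pairs `(π₁,π₂)` of partitions (as multisets of positive integers)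
with `|π₁| + |π₂| = n`, where `π₁` has odd parts of size at most `2L−1`, and `π₂` has at
most one part, that part odd and of size at most `2L−3`. -/
def setA (L n : ℕ) : Set (Multiset ℕ × Multiset ℕ) :=
  {p | p.1.sum + p.2.sum = n ∧
       (∀ x ∈ p.1, Odd x ∧ x ≤ 2 * L - 1) ∧
       p.2.card ≤ 1 ∧ (∀ x ∈ p.2, Odd x ∧ x ≤ 2 * L - 3)}

/-!
Glaisher's map replaces each part `k = 2^a·m` (`m` odd) of `π₁` by `2^a` parts equal to `m`. It
preserves the sum and is injective on partitions into distinct parts: the multiplicity of `m` in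
the image, written in binary, lists the exponents `a` of the parts of odd part `m`. As `1` is not a
part of `π₁`, the image has an even number of parts `1`. So an even part `j` of `π₂` can be lowered
to the odd part `j - 1` while a part `1` is added to the image: the parity of the number of parts
`1` records whether this happened.
-/

open Multiset

theorem Nat.eq_of_ordCompl_eq_of_factorization_eq {p a b : ℕ} (hc : ordCompl[p] a = ordCompl[p] b)
    (hf : a.factorization p = b.factorization p) : a = b := by
  rw [← Nat.ordProj_mul_ordCompl_eq_self a p, ← Nat.ordProj_mul_ordCompl_eq_self b p, hc, hf]

def glaisher (p : ℕ) (π : Multiset ℕ) : Multiset ℕ :=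
  π.bind fun k => replicate (ordProj[p] k) (ordCompl[p] k)

section Glaisher

variable {p : ℕ}

theorem sum_glaisher (π : Multiset ℕ) : (glaisher p π).sum = π.sum := by
  simp [glaisher, sum_bind, Nat.ordProj_mul_ordCompl_eq_self]

theorem mem_glaisher {π : Multiset ℕ} {x : ℕ} :
    x ∈ glaisher p π ↔ ∃ k ∈ π, ordCompl[p] k = x := by
  simp only [glaisher, mem_bind, mem_replicate, ne_eq, (Nat.ordProj_pos _ p).ne',
    not_false_eq_true, true_and, eq_comm]

theorem count_glaisher (s : Finset ℕ) (m : ℕ) :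
    count m (glaisher p s.val) = ∑ k ∈ s with ordCompl[p] k = m, ordProj[p] k := by
  simp [glaisher, count_bind, count_replicate, Finset.sum_filter, eq_comm]

theorem glaisher_injOn (hp : 2 ≤ p) : Set.InjOn (glaisher p) {π | π.Nodup} := by
  intro π hπ σ hσ h
  lift π to Finset ℕ using hπ
  lift σ to Finset ℕ using hσ
  have key : ∀ (s : Finset ℕ) (m : ℕ), count m (glaisher p s.val)
      = ∑ i ∈ {k ∈ s | ordCompl[p] k = m}.image (·.factorization p), p ^ i := by
    intro s m
    rw [count_glaisher, Finset.sum_image]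
    intro a ha b hb hab
    simp only [Finset.coe_filter, Set.mem_ofPred_eq] at ha hb
    exact Nat.eq_of_ordCompl_eq_of_factorization_eq (ha.2.trans hb.2.symm) hab
  have hexp : ∀ m, {k ∈ π | ordCompl[p] k = m}.image (·.factorization p)
      = {k ∈ σ | ordCompl[p] k = m}.image (·.factorization p) := fun m =>
    Finset.geomSum_injective hp (by simp only [← key, h])
  have hmem : ∀ (s : Finset ℕ) k, k ∈ s ↔
      k.factorization p ∈ {j ∈ s | ordCompl[p] j = ordCompl[p] k}.image (·.factorization p) := by
    intro s k
    simp only [Finset.mem_image, Finset.mem_filter]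
    exact ⟨fun hk => ⟨k, ⟨hk, rfl⟩, rfl⟩, fun ⟨j, ⟨hj, hc⟩, hf⟩ =>
      Nat.eq_of_ordCompl_eq_of_factorization_eq hc hf ▸ hj⟩
  congr 1
  ext k
  rw [hmem π, hmem σ, hexp]

theorem dvd_count_one_glaisher {s : Finset ℕ} (hs : 1 ∉ s) : p ∣ count 1 (glaisher p s.val) := by
  rw [count_glaisher]
  refine Finset.dvd_sum fun k hk => dvd_pow_self p fun h0 => hs ?_
  rw [Finset.mem_filter] at hk
  have hk1 := Nat.ordProj_mul_ordCompl_eq_self k p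
  rw [hk.2, h0] at hk1
  simpa [← hk1] using hk.1

end Glaisher

theorem odd_ordCompl_two {k : ℕ} (hk : k ≠ 0) : Odd (ordCompl[2] k) :=
  Nat.odd_iff.2 (Nat.two_dvd_ne_zero.1 (Nat.not_dvd_ordCompl Nat.prime_two hk))

def oddFloor (j : ℕ) : ℕ := if Even j then j - 1 else j

theorem odd_oddFloor {j : ℕ} (hj : 0 < j) : Odd (oddFloor j) := by
  unfold oddFloor
  split_ifs with h
  · exact Nat.Even.sub_odd hj h odd_one
  · exact Nat.not_even_iff_odd.1 h

theorem oddFloor_le (j : ℕ) : oddFloor j ≤ j := by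
  unfold oddFloor; split_ifs <;> omega

theorem sum_map_oddFloor_add_countP_even {s : Multiset ℕ} (hs : ∀ j ∈ s, 0 < j) :
    (s.map oddFloor).sum + s.countP Even = s.sum := by
  induction s using Multiset.induction with
  | empty => simp
  | cons a s ih =>
    have ha := hs a (mem_cons_self a s)
    have ih := ih fun j hj => hs j (mem_cons_of_mem hj)
    simp only [map_cons, sum_cons, countP_cons, oddFloor]
    split_ifs <;> omega

theorem eq_of_oddFloor_eq {a b : ℕ} (ha : 0 < a) (hb : 0 < b) (h : oddFloor a = oddFloor b)
    (he : Even a ↔ Even b) : a = b := by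
  unfold oddFloor at h
  split_ifs at h with h₁ h₂ <;> first | omega | tauto

theorem eq_of_map_oddFloor_eq {s t : Multiset ℕ} (hs : card s ≤ 1) (hs₀ : ∀ j ∈ s, 0 < j)
    (ht₀ : ∀ j ∈ t, 0 < j) (hmap : s.map oddFloor = t.map oddFloor)
    (heven : s.countP Even = t.countP Even) : s = t := by
  have hcard : card t = card s := by simpa using (congrArg card hmap).symm
  rcases Nat.le_one_iff_eq_zero_or_eq_one.1 hs with h | h
  · rw [card_eq_zero.1 h, card_eq_zero.1 (hcard.trans h)]
  obtain ⟨a, rfl⟩ := card_eq_one.1 h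
  obtain ⟨b, rfl⟩ := card_eq_one.1 (hcard.trans h)
  simp only [map_singleton, singleton_inj] at hmap
  simp only [← cons_zero, countP_cons, countP_zero, zero_add] at heven
  simp only [mem_singleton, forall_eq] at hs₀ ht₀
  rw [eq_of_oddFloor_eq hs₀ ht₀ hmap (by split_ifs at heven <;> tauto)]

def toOddPair (p : Multiset ℕ × Multiset ℕ) : Multiset ℕ × Multiset ℕ :=
  (glaisher 2 p.1 + replicate (p.2.countP Even) 1, p.2.map oddFloor)

theorem toOddPair_mem_setA {L n : ℕ} (hL : 0 < L) {p : Multiset ℕ × Multiset ℕ}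
    (hp : p ∈ setB L n) : toOddPair p ∈ setA L n := by
  obtain ⟨hsum, -, h₁, hcard, h₂⟩ := hp
  refine ⟨?_, ?_, by simpa [toOddPair] using hcard, ?_⟩
  · have := sum_map_oddFloor_add_countP_even fun j hj => (h₂ j hj).1
    simp only [toOddPair, sum_add, sum_glaisher, sum_replicate, smul_eq_mul, mul_one]
    omega
  · simp only [toOddPair, mem_add, mem_glaisher, mem_replicate]
    rintro x (⟨k, hk, rfl⟩ | ⟨-, rfl⟩)
    · obtain ⟨hk₀, -, hkL⟩ := h₁ k hk
      exact ⟨odd_ordCompl_two hk₀.ne', (Nat.ordCompl_le k 2).trans (by omega)⟩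
    · exact ⟨odd_one, by omega⟩
  · simp only [toOddPair, mem_map]
    rintro x ⟨j, hj, rfl⟩
    obtain ⟨hj₀, hjL⟩ := h₂ j hj
    exact ⟨odd_oddFloor hj₀, (oddFloor_le j).trans (by omega)⟩

theorem countP_even_eq_count_one_mod_two {L n : ℕ} {p : Multiset ℕ × Multiset ℕ}
    (hp : p ∈ setB L n) : p.2.countP Even = count 1 (toOddPair p).1 % 2 := by
  obtain ⟨-, hnd, h₁, hcard, -⟩ := hp
  have h1 : 2 ∣ count 1 (glaisher 2 p.1) :=
    dvd_count_one_glaisher (s := ⟨p.1, hnd⟩) fun h => (h₁ 1 h).2.1 rfl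
  have heven_le := (countP_le_card Even p.2).trans hcard
  simp only [toOddPair, count_add, count_replicate_self]
  omega

theorem toOddPair_injOn (L n : ℕ) : Set.InjOn toOddPair (setB L n) := by
  intro p hp q hq h
  have heven : p.2.countP Even = q.2.countP Even := by
    rw [countP_even_eq_count_one_mod_two hp, countP_even_eq_count_one_mod_two hq, h]
  obtain ⟨-, hp₁, -, hp₂, hpos⟩ := hp
  obtain ⟨-, hq₁, -, hq₂, hqos⟩ := hq
  simp only [toOddPair, Prod.mk.injEq, heven, add_left_inj] at h
  exact Prod.ext (glaisher_injOn le_rfl hp₁ hq₁ h.1)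
    (eq_of_map_oddFloor_eq hp₂ (fun j hj => (hpos j hj).1) (fun j hj => (hqos j hj).1) h.2 heven)

theorem finite_setOf_pos_sum_le (n : ℕ) :
    {s : Multiset ℕ | (∀ x ∈ s, 0 < x) ∧ s.sum ≤ n}.Finite := by
  refine ((Set.finite_Iic n).biUnion fun k _ =>
    Set.finite_range (Nat.Partition.parts (n := k))).subset ?_
  rintro s ⟨hpos, hsum⟩
  simp only [Set.mem_iUnion, Set.mem_range]
  exact ⟨s.sum, hsum, ⟨s, fun hi => hpos _ hi, rfl⟩, rfl⟩

theorem finite_setA (L n : ℕ) : (setA L n).Finite := by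
  refine ((finite_setOf_pos_sum_le n).prod (finite_setOf_pos_sum_le n)).subset ?_
  rintro p ⟨hsum, h₁, -, h₂⟩
  exact ⟨⟨fun x hx => (h₁ x hx).1.pos, by omega⟩, fun x hx => (h₂ x hx).1.pos, by omega⟩

theorem exists_injection_setB_setA (L : ℕ) (hL : 0 < L) (n : ℕ) :
    (∃ f : setB L n → setA L n, Function.Injective f) ∧
      Nat.card (setB L n) ≤ Nat.card (setA L n) := by
  let f : setB L n → setA L n := fun p => ⟨toOddPair p, toOddPair_mem_setA hL p.2⟩
  have hf : Function.Injective f := fun p q h =>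
    Subtype.ext (toOddPair_injOn L n p.2 q.2 (congrArg Subtype.val h))
  have := (finite_setA L n).to_subtype
  exact ⟨⟨f, hf⟩, Nat.card_le_card_of_injective f hf⟩
end

section
/- For every integer n ≥ 0, the total number of parts, summed over all partitions of n into distinct parts, minus the total number of different part sizes, summed over all partitions of n into odd parts, equals c(n), the number of partitions of n in which exactly one part size occurs exactly three times and every other part size occurs exactly once. -/
/-!
Group the partitions by a part size `k`. Let `D(m)` be the number of partitions of `m` into
distinct parts and `S_j(k)` the number of partitions of `n` in which `k` occurs exactly `j` times
and every other part size exactly once. The total number of parts of the distinct partitions of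
`n` is `∑ₖ S_1(k)`, and `c(n) = ∑ₖ S_3(k)`. Removing one copy of an odd part `k` and applying
Euler's theorem, the total number of part sizes of the odd partitions is `∑_{k odd} D(n - k)`.
Removing `j` copies of `k` shows `S_j(k) + S_{j+1}(k) = D(n - jk)`, hence
`∑ₖ S_1(k) - ∑ₖ S_3(k) = ∑ₖ D(n - k) - ∑ₖ D(n - 2k) = ∑_{k odd} D(n - k)`.
-/

/-- `c(n)`: the number of partitions of `n` in which exactly one part size occurs exactly
three times while every other part size occurs exactly once. -/
def cBeck (n : ℕ) : ℕ :=
  ((Finset.univ : Finset (Nat.Partition n)).filter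
    (fun π => ∃ a ∈ π.parts.toFinset, π.parts.count a = 3 ∧
      ∀ b ∈ π.parts.toFinset, b ≠ a → π.parts.count b = 1)).card

open Finset

theorem Finset.sum_Icc_eq_sum_odd_add_sum_two_mul {M : Type*} [AddCommMonoid M] {n : ℕ}
    (f : ℕ → M) (hf : ∀ k, n < k → f k = 0) :
    ∑ k ∈ Icc 1 n, f k = ∑ k ∈ Icc 1 n with Odd k, f k + ∑ k ∈ Icc 1 n, f (2 * k) := by
  rw [← sum_filter_add_sum_filter_not _ Odd,
    ← sum_image (s := Icc 1 n) (g := (2 * ·)) (f := f) fun a _ b _ h => by simpa using h]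
  congr 1
  refine sum_subset (fun k hk => ?_) fun k hk hkn => hf k ?_
  · obtain ⟨hk, hev⟩ := mem_filter.1 hk
    obtain ⟨j, rfl⟩ := Nat.not_odd_iff_even.1 hev
    exact mem_image.2 ⟨j, by grind, by ring⟩
  · obtain ⟨j, hj, rfl⟩ := mem_image.1 hk
    simp only [mem_filter, mem_Icc, Nat.not_odd_iff_even, even_two_mul, and_true] at hkn hj
    omega

theorem Multiset.forall_mem_ne_count_eq_one_iff {α : Type*} [DecidableEq α] {s : Multiset α}
    {k : α} :
    (∀ i ∈ s, i ≠ k → s.count i = 1) ↔ ∀ i ≠ k, s.count i ≤ 1 := by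
  refine ⟨fun h i hi => ?_, fun h i hi hik => le_antisymm (h i hik) (Multiset.count_pos.2 hi)⟩
  by_cases his : i ∈ s
  · exact (h i his hi).le
  · simp [Multiset.count_eq_zero.2 his]

namespace Nat.Partition

variable {n : ℕ}

def partitionWithPartsEquiv {t : Multiset ℕ} (ht : ∀ i ∈ t, 0 < i) (htn : t.sum ≤ n) :
    {π : n.Partition // t ≤ π.parts} ≃ (n - t.sum).Partition where
  toFun π :=
    { parts := π.1.parts - t
      parts_pos := fun hi => π.1.parts_pos (Multiset.mem_of_le (Multiset.sub_le_self _ _) hi)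
      parts_sum := by
        have := congrArg Multiset.sum (tsub_add_cancel_of_le π.2)
        rw [Multiset.sum_add, π.1.parts_sum] at this
        omega }
  invFun q :=
    ⟨{ parts := q.parts + t
       parts_pos := fun hi => (Multiset.mem_add.1 hi).elim q.parts_pos (ht _)
       parts_sum := by rw [Multiset.sum_add, q.parts_sum]; omega },
     Multiset.le_add_left _ _⟩
  left_inv π := Subtype.ext <| Nat.Partition.ext <| tsub_add_cancel_of_le π.2
  right_inv q := Nat.Partition.ext <| add_tsub_cancel_right _ _

theorem sum_le_of_le_parts {t : Multiset ℕ} {π : n.Partition} (h : t ≤ π.parts) : t.sum ≤ n := by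
  rw [← π.parts_sum, ← tsub_add_cancel_of_le h, Multiset.sum_add]
  exact Nat.le_add_left _ _

theorem card_filter_le_parts {t : Multiset ℕ} (ht : ∀ i ∈ t, 0 < i)
    (P : Multiset ℕ → Prop) [DecidablePred P] :
    #{π : n.Partition | t ≤ π.parts ∧ P (π.parts - t)} =
      if t.sum ≤ n then #{q : (n - t.sum).Partition | P q.parts} else 0 := by
  split_ifs with htn
  · let e := partitionWithPartsEquiv ht htn
    refine card_bij' (fun π hπ => e ⟨π, (mem_filter.1 hπ).2.1⟩) (fun q _ => (e.symm q).1)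
      (fun π hπ => ?_) (fun q hq => ?_) (fun π _ => by simp) (fun q _ => by simp)
    · simpa [e, partitionWithPartsEquiv] using (mem_filter.1 hπ).2.2
    · simpa [e, partitionWithPartsEquiv] using (mem_filter.1 hq).2
  · exact Finset.card_eq_zero.2 <|
      filter_eq_empty_iff.2 fun π _ h => htn (sum_le_of_le_parts h.1)

theorem sum_card_toFinset_parts (P : Finset n.Partition) :
    ∑ π ∈ P, #π.parts.toFinset = ∑ k ∈ Icc 1 n, #{π ∈ P | k ∈ π.parts} := by
  have hsizes (π : n.Partition) : π.parts.toFinset = {k ∈ Icc 1 n | k ∈ π.parts} := by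
    ext k
    simp only [Multiset.mem_toFinset, mem_filter, mem_Icc]
    exact ⟨fun hk => ⟨⟨π.parts_pos hk, le_of_mem_parts hk⟩, hk⟩, And.right⟩
  simp_rw [hsizes, card_filter]
  exact sum_comm

theorem card_filter_mem_parts_odds {k : ℕ} (hk : k ≤ n) :
    #{π ∈ odds n | k ∈ π.parts} = if Odd k then #(odds (n - k)) else 0 := by
  split_ifs with hodd
  · have hpos : ∀ i ∈ ({k} : Multiset ℕ), 0 < i := by simpa using hodd.pos
    have key := card_filter_le_parts (n := n) hpos (fun s => ∀ i ∈ s, ¬Even i)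
    rw [Multiset.sum_singleton, if_pos hk] at key
    refine (congrArg card ?_).trans key
    rw [odds, restricted, filter_filter]
    congr 1 with π
    simp only [Multiset.singleton_le, Multiset.sub_singleton]
    constructor
    · rintro ⟨hπ, hkπ⟩
      exact ⟨hkπ, fun i hi => hπ i (Multiset.mem_of_mem_erase hi)⟩
    · rintro ⟨hkπ, hπ⟩
      refine ⟨?_, hkπ⟩
      rw [← Multiset.cons_erase hkπ]
      exact Multiset.forall_mem_cons.2 ⟨Nat.not_even_iff_odd.2 hodd, hπ⟩
  · refine Finset.card_eq_zero.2 <| filter_eq_empty_iff.2 fun π hπ hkπ => hodd ?_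
    exact Nat.not_even_iff_odd.1 ((mem_filter.1 hπ).2 k hkπ)

def distinctsWithCount (n k j : ℕ) : Finset n.Partition :=
  {π | π.parts.count k = j ∧ ∀ i ∈ π.parts, i ≠ k → π.parts.count i = 1}

theorem filter_mem_parts_distincts (k : ℕ) :
    {π ∈ distincts n | k ∈ π.parts} = distinctsWithCount n k 1 := by
  ext π
  simp only [distincts, distinctsWithCount, filter_filter, mem_filter, mem_univ, true_and,
    Multiset.nodup_iff_count_le_one, Multiset.forall_mem_ne_count_eq_one_iff]
  rw [← Multiset.count_pos]
  constructor
  · rintro ⟨h, hk⟩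
    exact ⟨le_antisymm (h k) hk, fun i _ => h i⟩
  · rintro ⟨hk, h⟩
    refine ⟨fun i => ?_, by omega⟩
    by_cases hi : i = k
    · subst hi; omega
    · exact h i hi

theorem card_distinctsWithCount_add_card_succ {k : ℕ} (hk : 0 < k) (j : ℕ) :
    #(distinctsWithCount n k j) + #(distinctsWithCount n k (j + 1)) =
      if j * k ≤ n then #(distincts (n - j * k)) else 0 := by
  have hpos : ∀ i ∈ Multiset.replicate j k, 0 < i := fun i hi =>
    Multiset.eq_of_mem_replicate hi ▸ hk
  have key := card_filter_le_parts (n := n) hpos Multiset.Nodup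
  rw [Multiset.sum_replicate, smul_eq_mul] at key
  rw [distincts, ← key, ← card_union_of_disjoint, distinctsWithCount, distinctsWithCount,
    ← filter_or]
  · congr 1 with π
    simp only [mem_filter, mem_univ, true_and, ← Multiset.le_count_iff_replicate_le,
      Multiset.nodup_iff_count_le_one, Multiset.forall_mem_ne_count_eq_one_iff,
      Multiset.count_sub, Multiset.count_replicate]
    rw [← or_and_right]
    constructor
    · rintro ⟨hj, h⟩
      refine ⟨by omega, fun i => ?_⟩
      obtain rfl | hi := eq_or_ne k i
      · simp only [if_true]
        omega
      · simpa [hi] using h i hi.symm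
    · rintro ⟨hj, h⟩
      have hk' := h k
      simp only [if_true] at hk'
      exact ⟨by omega, fun i hi => by simpa [Ne.symm hi] using h i⟩
  · exact disjoint_filter.2 fun π _ h h' => by omega

end Nat.Partition

open Nat.Partition

theorem cBeck_eq_sum_card_distinctsWithCount (n : ℕ) :
    cBeck n = ∑ k ∈ Icc 1 n, #(distinctsWithCount n k 3) := by
  rw [cBeck, ← card_biUnion]
  · congr 1 with π
    simp only [distinctsWithCount, mem_filter, mem_univ, true_and, mem_biUnion,
      mem_Icc, Multiset.mem_toFinset]
    constructor
    · rintro ⟨k, hk, h3, h1⟩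
      exact ⟨k, ⟨π.parts_pos hk, le_of_mem_parts hk⟩, h3, h1⟩
    · rintro ⟨k, -, h3, h1⟩
      exact ⟨k, Multiset.count_pos.1 (by omega), h3, h1⟩
  · intro k _ k' _ hkk'
    refine disjoint_filter.2 fun π _ h h' => ?_
    have := h.2 k' (Multiset.count_pos.1 (by omega)) (Ne.symm hkk')
    omega

theorem andrews_beck (n : ℕ) :
    ((∑ π ∈ Nat.Partition.distincts n, π.parts.card : ℕ) : ℤ)
      - ((∑ π ∈ Nat.Partition.odds n, π.parts.toFinset.card : ℕ) : ℤ) = cBeck n := by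
  have hdistincts : ∑ π ∈ distincts n, π.parts.card =
      ∑ k ∈ Icc 1 n, #(distinctsWithCount n k 1) := by
    simp_rw [← filter_mem_parts_distincts, ← sum_card_toFinset_parts]
    exact sum_congr rfl fun π hπ => (Multiset.toFinset_card_of_nodup (mem_filter.1 hπ).2).symm
  -- `g m = D(n - m)`, forced to vanish for `m > n`, where `n - m` would truncate to `0`.
  set g : ℕ → ℕ := fun m => if m ≤ n then #(distincts (n - m)) else 0
  have hodds : ∑ π ∈ odds n, #π.parts.toFinset = ∑ k ∈ Icc 1 n with Odd k, g k := by
    rw [sum_card_toFinset_parts, sum_filter]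
    refine sum_congr rfl fun k hk => ?_
    have hkn := (mem_Icc.1 hk).2
    rw [card_filter_mem_parts_odds hkn, card_odds_eq_card_distincts]
    simp [g, hkn]
  have hsplit := sum_Icc_eq_sum_odd_add_sum_two_mul g fun k hk => if_neg (Nat.not_le.2 hk)
  have h12 : ∑ k ∈ Icc 1 n, (#(distinctsWithCount n k 1) + #(distinctsWithCount n k 2)) =
      ∑ k ∈ Icc 1 n, g k :=
    sum_congr rfl fun k hk => by
      rw [card_distinctsWithCount_add_card_succ (mem_Icc.1 hk).1, one_mul]
  have h23 : ∑ k ∈ Icc 1 n, (#(distinctsWithCount n k 2) + #(distinctsWithCount n k 3)) =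
      ∑ k ∈ Icc 1 n, g (2 * k) :=
    sum_congr rfl fun k hk => by
      rw [card_distinctsWithCount_add_card_succ (mem_Icc.1 hk).1, mul_comm]
  rw [sum_add_distrib] at h12 h23
  rw [hdistincts, hodds, cBeck_eq_sum_card_distinctsWithCount]
  omega
end
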